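/- arXiv:2205.00505 — 2 statements merged into one kernel-verified Lean document; each statement's English description precedes it below -/
import Mathlib

section
/- For all a, b ∈ [0,1], 4·(1 − √(a·b) − √((1−a)·(1−b))) ≥ (a − b)². -/
lemma aux_amgm (x y : ℝ) (hx0 : 0 ≤ x) (hx1 : x ≤ 1) (hy0 : 0 ≤ y) (hy1 : y ≤ 1) :
    x + y - 2 * Real.sqrt (x * y) ≥ (x - y)^2 / 4 := by
  have hs := Real.sq_sqrt hx0
  have ht := Real.sq_sqrt hy0
  have hsq : Real.sqrt (x * y) = Real.sqrt x * Real.sqrt y := Real.sqrt_mul hx0 y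
  have hs1 : Real.sqrt x ≤ 1 := by
    rw [show (1:ℝ) = Real.sqrt 1 by simp]; exact Real.sqrt_le_sqrt hx1
  have ht1 : Real.sqrt y ≤ 1 := by
    rw [show (1:ℝ) = Real.sqrt 1 by simp]; exact Real.sqrt_le_sqrt hy1
  have hs0 := Real.sqrt_nonneg x
  have ht0 := Real.sqrt_nonneg y
  rw [hsq]
  nlinarith [sq_nonneg (Real.sqrt x - Real.sqrt y), sq_nonneg (Real.sqrt x + Real.sqrt y),
    mul_nonneg hs0 ht0, sq_nonneg (Real.sqrt x * Real.sqrt y)]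

theorem stmt3 : ∀ a b : ℝ, a ∈ Set.Icc (0:ℝ) 1 → b ∈ Set.Icc (0:ℝ) 1 →
    4 * (1 - Real.sqrt (a * b) - Real.sqrt ((1 - a) * (1 - b))) ≥ (a - b)^2 := by
  intro a b ⟨ha0, ha1⟩ ⟨hb0, hb1⟩
  have h1 := aux_amgm a b ha0 ha1 hb0 hb1
  have h2 := aux_amgm (1 - a) (1 - b) (by linarith) (by linarith) (by linarith) (by linarith)
  have : ((1 - a) - (1 - b))^2 = (a - b)^2 := by ring
  linarith [this ▸ h2]
end

section
/- With the setup of the previous item, for any measurable function θ̂ : [0,1] → [0,1], define γ_0(x) = 4(1−λ)(√((1−θ̂(x))/(1−θ_0(x))) − 1) and γ_1(x) = 4λ(√(θ̂(x)/θ_0(x)) − 1), where θ_0 takes values in (0,1). Then −∫γ_0 dμ_0 − ∫γ_1 dμ_1 = 2∫(√θ̂ − √θ_0)² dG + 2∫(√(1−θ̂) − √(1−θ_0))² dG ≥ ∫(θ̂ − θ_0)² dG. -/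
/-!
Multiplying by the densities `dμ₁/dG = θ₀/λ` and `dμ₀/dG = (1-θ₀)/(1-λ)` turns `γ₁` and
`γ₀` into `4(√θ̂√θ₀ - θ₀)` and `4(√(1-θ̂)√(1-θ₀) - (1-θ₀))`, so the left side is the
`G`-integral of `4(1 - √θ̂√θ₀ - √(1-θ̂)√(1-θ₀))`, which expands to the two Hellinger-type
integrands. For the inequality put `p = √θ̂ + √θ₀` and `q = √(1-θ̂) + √(1-θ₀)`: then
`θ̂ - θ₀ = (√θ̂ - √θ₀) p = (√(1-θ₀) - √(1-θ̂)) q` and `p² + q² ≤ 4`, so `p² ≤ 2` or `q² ≤ 2`.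
-/

open MeasureTheory Set

section Pointwise

variable {a b : ℝ}

lemma sub_eq_sqrt_sub_mul_sqrt_add (ha : 0 ≤ a) (hb : 0 ≤ b) :
    a - b = (√a - √b) * (√a + √b) := by
  linear_combination Real.sq_sqrt hb - Real.sq_sqrt ha

lemma mul_sqrt_div_sub_one (a : ℝ) (hb : 0 ≤ b) : b * (√(a / b) - 1) = √a * √b - b := by
  rcases hb.eq_or_lt with rfl | hb
  · simp
  have hsb : √b ≠ 0 := (Real.sqrt_pos.2 hb).ne'
  calc b * (√(a / b) - 1) = √b ^ 2 * (√a / √b) - b := by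
        rw [Real.sqrt_div' a hb.le, Real.sq_sqrt hb.le]; ring
    _ = √a * √b - b := by field_simp

lemma bernoulli_hellinger_eq (ha : a ∈ Icc (0 : ℝ) 1) (hb : b ∈ Icc (0 : ℝ) 1) :
    2 * (√a - √b) ^ 2 + 2 * (√(1 - a) - √(1 - b)) ^ 2 =
      4 * (1 - √a * √b - √(1 - a) * √(1 - b)) := by
  linear_combination 2 * Real.sq_sqrt ha.1 + 2 * Real.sq_sqrt hb.1 +
    2 * Real.sq_sqrt (sub_nonneg.2 ha.2) + 2 * Real.sq_sqrt (sub_nonneg.2 hb.2)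

lemma sq_sub_le_bernoulli_hellinger (ha : a ∈ Icc (0 : ℝ) 1) (hb : b ∈ Icc (0 : ℝ) 1) :
    (a - b) ^ 2 ≤ 2 * (√a - √b) ^ 2 + 2 * (√(1 - a) - √(1 - b)) ^ 2 := by
  have ha' : 0 ≤ 1 - a := sub_nonneg.2 ha.2
  have hb' : 0 ≤ 1 - b := sub_nonneg.2 hb.2
  have hp : (a - b) ^ 2 = (√a - √b) ^ 2 * (√a + √b) ^ 2 := by
    rw [← mul_pow, ← sub_eq_sqrt_sub_mul_sqrt_add ha.1 hb.1]
  have hq : (a - b) ^ 2 = (√(1 - a) - √(1 - b)) ^ 2 * (√(1 - a) + √(1 - b)) ^ 2 := by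
    rw [← mul_pow, ← sub_eq_sqrt_sub_mul_sqrt_add ha' hb']
    ring
  have hpq : (√a + √b) ^ 2 + (√(1 - a) + √(1 - b)) ^ 2 ≤ 4 := by
    nlinarith [sq_nonneg (√a - √b), sq_nonneg (√(1 - a) - √(1 - b)), Real.sq_sqrt ha.1,
      Real.sq_sqrt hb.1, Real.sq_sqrt ha', Real.sq_sqrt hb']
  rcases le_total ((√a + √b) ^ 2) 2 with hp2 | hq2
  · nlinarith [mul_le_mul_of_nonneg_left hp2 (sq_nonneg (√a - √b)),
      sq_nonneg (√(1 - a) - √(1 - b))]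
  · have hq2 : (√(1 - a) + √(1 - b)) ^ 2 ≤ 2 := by linarith
    nlinarith [mul_le_mul_of_nonneg_left hq2 (sq_nonneg (√(1 - a) - √(1 - b))),
      sq_nonneg (√a - √b)]

end Pointwise

section Integral

variable {α : Type*} [MeasurableSpace α] {μ : Measure α}

lemma integral_withDensity_ofReal {E : Type*} [NormedAddCommGroup E] [NormedSpace ℝ E]
    {ρ : α → ℝ} (hρ : Measurable ρ) (hρ0 : ∀ᵐ x ∂μ, 0 ≤ ρ x) (g : α → E) :
    ∫ x, g x ∂μ.withDensity (fun x => ENNReal.ofReal (ρ x)) = ∫ x, ρ x • g x ∂μ := by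
  rw [integral_withDensity_eq_integral_toReal_smul hρ.ennreal_ofReal
    (ae_of_all _ fun _ => ENNReal.ofReal_lt_top)]
  refine integral_congr_ae ?_
  filter_upwards [hρ0] with x hx
  rw [ENNReal.toReal_ofReal hx]

lemma integrable_continuous_comp_of_mem_compact [IsFiniteMeasure μ] {β E : Type*}
    [TopologicalSpace β] [NormedAddCommGroup E] {φ : β → E} (hφ : Continuous φ) {K : Set β}
    (hK : IsCompact K) {F : α → β} (hF : AEStronglyMeasurable F μ) (hFK : ∀ᵐ x ∂μ, F x ∈ K) :
    Integrable (fun x => φ (F x)) μ := by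
  obtain ⟨C, hC⟩ := hK.exists_bound_of_continuousOn hφ.continuousOn
  exact .of_bound (hφ.comp_aestronglyMeasurable hF) C (hFK.mono fun x hx => hC _ hx)

lemma integral_withDensity_div_mul_sqrt_div_sub_one {f g : α → ℝ} (hg : Measurable g)
    (hg0 : ∀ x, 0 ≤ g x) {c : ℝ} (hc : 0 < c) (k : ℝ) :
    ∫ x, k * c * (√(f x / g x) - 1) ∂μ.withDensity (fun x => ENNReal.ofReal (g x / c)) =
      ∫ x, k * (√(f x) * √(g x) - g x) ∂μ := by
  rw [integral_withDensity_ofReal (hg.div_const c) (ae_of_all _ fun x => div_nonneg (hg0 x) hc.le)]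
  congr 1 with x
  rw [smul_eq_mul, ← mul_sqrt_div_sub_one _ (hg0 x)]
  field_simp

end Integral

theorem stmt14 (lam : ℝ) (hlam : lam ∈ Set.Ioo (0:ℝ) 1)
    (μ0 μ1 : Measure (Set.Icc (0:ℝ) 1))
    [IsProbabilityMeasure μ0] [IsProbabilityMeasure μ1]
    (G : Measure (Set.Icc (0:ℝ) 1))
    (hG : G = ENNReal.ofReal lam • μ1 + ENNReal.ofReal (1 - lam) • μ0)
    (θ0 : Set.Icc (0:ℝ) 1 → ℝ) (hθ0m : Measurable θ0)
    (hθ0 : ∀ x, θ0 x ∈ Set.Ioo (0:ℝ) 1)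
    (hμ1d : μ1 = G.withDensity (fun x => ENNReal.ofReal (θ0 x / lam)))
    (hμ0d : μ0 = G.withDensity (fun x => ENNReal.ofReal ((1 - θ0 x) / (1 - lam))))
    (θhat : Set.Icc (0:ℝ) 1 → ℝ) (hθhatm : Measurable θhat)
    (hθhat : ∀ x, θhat x ∈ Set.Icc (0:ℝ) 1)
    (γ0 γ1 : Set.Icc (0:ℝ) 1 → ℝ)
    (hγ0 : ∀ x, γ0 x = 4 * (1 - lam) * (Real.sqrt ((1 - θhat x) / (1 - θ0 x)) - 1))
    (hγ1 : ∀ x, γ1 x = 4 * lam * (Real.sqrt (θhat x / θ0 x) - 1)) :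
    (-∫ x, γ0 x ∂μ0 - ∫ x, γ1 x ∂μ1 =
      2 * ∫ x, (Real.sqrt (θhat x) - Real.sqrt (θ0 x)) ^ 2 ∂G +
      2 * ∫ x, (Real.sqrt (1 - θhat x) - Real.sqrt (1 - θ0 x)) ^ 2 ∂G) ∧
    (2 * ∫ x, (Real.sqrt (θhat x) - Real.sqrt (θ0 x)) ^ 2 ∂G +
      2 * ∫ x, (Real.sqrt (1 - θhat x) - Real.sqrt (1 - θ0 x)) ^ 2 ∂G ≥
      ∫ x, (θhat x - θ0 x) ^ 2 ∂G) := by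
  obtain ⟨hl0, hl1⟩ := hlam
  have hθ0' x : θ0 x ∈ Icc (0 : ℝ) 1 := Ioo_subset_Icc_self (hθ0 x)
  have : IsFiniteMeasure G := ⟨by simp [hG]⟩
  have hint (φ : ℝ × ℝ → ℝ) (hφ : Continuous φ) : Integrable (fun x => φ (θhat x, θ0 x)) G :=
    integrable_continuous_comp_of_mem_compact hφ (isCompact_Icc.prod isCompact_Icc)
      (hθhatm.prodMk hθ0m).aestronglyMeasurable (ae_of_all _ fun x => ⟨hθhat x, hθ0' x⟩)
  have hγ0G : ∫ x, γ0 x ∂μ0 = ∫ x, 4 * (√(1 - θhat x) * √(1 - θ0 x) - (1 - θ0 x)) ∂G := by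
    simp only [hγ0, hμ0d]
    exact integral_withDensity_div_mul_sqrt_div_sub_one (by fun_prop)
      (fun x => sub_nonneg.2 (hθ0' x).2) (sub_pos.2 hl1) 4
  have hγ1G : ∫ x, γ1 x ∂μ1 = ∫ x, 4 * (√(θhat x) * √(θ0 x) - θ0 x) ∂G := by
    simp only [hγ1, hμ1d]
    exact integral_withDensity_div_mul_sqrt_div_sub_one hθ0m (fun x => (hθ0' x).1) hl0 4
  have hsum : 2 * ∫ x, (√(θhat x) - √(θ0 x)) ^ 2 ∂G +
      2 * ∫ x, (√(1 - θhat x) - √(1 - θ0 x)) ^ 2 ∂G =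
        ∫ x, 2 * (√(θhat x) - √(θ0 x)) ^ 2 + 2 * (√(1 - θhat x) - √(1 - θ0 x)) ^ 2 ∂G := by
    rw [← integral_const_mul, ← integral_const_mul, integral_add
      (hint (fun p => 2 * (√p.1 - √p.2) ^ 2) (by fun_prop))
      (hint (fun p => 2 * (√(1 - p.1) - √(1 - p.2)) ^ 2) (by fun_prop))]
  rw [hsum]
  refine ⟨?_, ?_⟩
  · rw [hγ0G, hγ1G, ← integral_neg, ← integral_sub
      (hint (fun p => -(4 * (√(1 - p.1) * √(1 - p.2) - (1 - p.2)))) (by fun_prop))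
      (hint (fun p => 4 * (√p.1 * √p.2 - p.2)) (by fun_prop))]
    congr 1 with x
    rw [bernoulli_hellinger_eq (hθhat x) (hθ0' x)]
    ring
  · exact integral_mono_of_nonneg (ae_of_all _ fun x => sq_nonneg _)
      (hint (fun p => 2 * (√p.1 - √p.2) ^ 2 + 2 * (√(1 - p.1) - √(1 - p.2)) ^ 2) (by fun_prop))
      (ae_of_all _ fun x => sq_sub_le_bernoulli_hellinger (hθhat x) (hθ0' x))
end
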